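/- arXiv:2204.06367 — 3 statements merged into one kernel-verified Lean document; each statement's English description precedes it below -/
import Mathlib

section
/- Let λ ∈ ℝⁿ with n = 2^m, and let B : Fin n → (Fin m → Bool) be a bijection. Suppose λᵢ ≥ 0 for all i, ∑ᵢ λᵢ = 1, and there exist ζ : Fin m → Bool such that for every k, ∑ over {i : B i k = true} λᵢ ≤ (if ζ k then 1 else 0) and ∑ over {i : B i k = false} λᵢ ≤ (if ζ k then 0 else 1). Then there exists an index j with λⱼ = 1 and λᵢ = 0 for all i ≠ j. -/
theorem log_sos1_encoding_sound
    (m n : ℕ) (hn : n = 2 ^ m)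
    (lam : Fin n → ℝ)
    (B : Fin n → (Fin m → Bool)) (hB : Function.Bijective B)
    (hnonneg : ∀ i, 0 ≤ lam i)
    (hsum : ∑ i, lam i = 1)
    (zeta : Fin m → Bool)
    (hplus : ∀ k : Fin m,
      ∑ i ∈ Finset.univ.filter (fun i => B i k = true), lam i ≤
        (if zeta k then (1 : ℝ) else 0))
    (hzero : ∀ k : Fin m,
      ∑ i ∈ Finset.univ.filter (fun i => B i k = false), lam i ≤
        (if zeta k then (0 : ℝ) else 1)) :
    ∃ j, lam j = 1 ∧ ∀ i, i ≠ j → lam i = 0 := by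
  obtain ⟨j, hj⟩ := hB.2 zeta
  have hz : ∀ i, B i ≠ zeta → lam i = 0 := by
    intro i hne
    obtain ⟨k, hk⟩ : ∃ k, B i k ≠ zeta k := by
      by_contra h
      push_neg at h
      exact hne (funext h)
    have key : lam i ≤ 0 := by
      cases hzk : zeta k with
      | true =>
        have hik : B i k = false := by
          cases h : B i k <;> simp_all
        have hle : lam i ≤ ∑ x ∈ Finset.univ.filter (fun x => B x k = false), lam x :=
          Finset.single_le_sum (fun x _ => hnonneg x)
            (Finset.mem_filter.2 ⟨Finset.mem_univ i, hik⟩)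
        have := hzero k
        rw [hzk] at this
        simpa using hle.trans this
      | false =>
        have hik : B i k = true := by
          cases h : B i k <;> simp_all
        have hle : lam i ≤ ∑ x ∈ Finset.univ.filter (fun x => B x k = true), lam x :=
          Finset.single_le_sum (fun x _ => hnonneg x)
            (Finset.mem_filter.2 ⟨Finset.mem_univ i, hik⟩)
        have := hplus k
        rw [hzk] at this
        simpa using hle.trans this
    exact le_antisymm key (hnonneg i)
  refine ⟨j, ?_, ?_⟩
  · have : ∑ i, lam i = lam j := by
      refine Finset.sum_eq_single j (fun i _ hne => ?_) (by simp)
      exact hz i (fun h => hne (hB.1 (h.trans hj.symm)))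
    rw [← this, hsum]
  · intro i hi
    exact hz i (fun h => hi (hB.1 (h.trans hj.symm)))
end

section
/- Let ρ*, and continuous indicator variables z over the nodes of a finite formula tree satisfy: (leaf, predicate π at time t) ρ* ≤ -g^π(y_t) + M(1 - z^π); (∧-node) z^φ ≤ z^{φᵢ} for each child; (∨-node) the vector (1 - z^φ, z^{φ₁}, …, z^{φ_N}) lies in SOS1; (root) z^φ = 1; and each z lies in [0,1]. Then for every node φ, z^φ = 1 implies ρ^φ(y) ≥ ρ* - M·0, i.e., ρ* is a lower bound on the robustness ρ^φ(y) whenever M is chosen larger than any achievable robustness magnitude. In particular ρ* ≤ ρ^{root}(y), so ρ* ≥ 0 implies the signal satisfies the specification. -/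
/-- STL formula trees: predicate leaves (a predicate symbol and a timestep),
and finite (nonempty) conjunction and disjunction nodes. -/
inductive Formula (P : Type) : Type
  | pred : P → ℕ → Formula P
  | conj : (n : ℕ) → (Fin (n + 1) → Formula P) → Formula P
  | disj : (n : ℕ) → (Fin (n + 1) → Formula P) → Formula P

/-- Robustness semantics: `ρ^π(y) = -g^π(y_t)`, `∧` is min over children,
`∨` is max over children. -/
noncomputable def Formula.rob {P Y : Type} (g : P → Y → ℝ) (y : ℕ → Y) :
    Formula P → ℝ
  | .pred π t => -(g π (y t))
  | .conj _ c => Finset.univ.inf' Finset.univ_nonempty (fun i => (c i).rob g y)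
  | .disj _ c => Finset.univ.sup' Finset.univ_nonempty (fun i => (c i).rob g y)

/-- SOS1: nonnegative entries, summing to one, with (exactly) one entry equal to 1. -/
def IsSOS1 {n : ℕ} (v : Fin n → ℝ) : Prop :=
  (∀ i, 0 ≤ v i) ∧ (∑ i, v i = 1) ∧ ∃ j, v j = 1

/-- The MICP encoding constraints, with indicator variables `z` indexed by the
node's position (path) in the tree: big-M constraints at leaves, `z^φ ≤ z^{φᵢ}`
at ∧-nodes, SOS1 on `(1 - z^φ, z^{φ₁}, …, z^{φ_N})` at ∨-nodes, and `z ∈ [0,1]`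
everywhere. -/
def Formula.EncOK {P Y : Type} (g : P → Y → ℝ) (y : ℕ → Y) (M ρStar : ℝ)
    (z : List ℕ → ℝ) : Formula P → List ℕ → Prop
  | .pred π t, p => 0 ≤ z p ∧ z p ≤ 1 ∧ ρStar ≤ -(g π (y t)) + M * (1 - z p)
  | .conj n c, p => (0 ≤ z p ∧ z p ≤ 1) ∧
      ∀ i : Fin (n + 1), z p ≤ z ((i : ℕ) :: p) ∧ (c i).EncOK g y M ρStar z ((i : ℕ) :: p)
  | .disj n c, p => (0 ≤ z p ∧ z p ≤ 1) ∧
      IsSOS1 (Fin.cons (1 - z p) (fun i : Fin (n + 1) => z ((i : ℕ) :: p))) ∧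
      ∀ i : Fin (n + 1), (c i).EncOK g y M ρStar z ((i : ℕ) :: p)

theorem Formula.EncOK.bounds {P Y : Type} {g : P → Y → ℝ} {y : ℕ → Y} {M ρStar : ℝ}
    {z : List ℕ → ℝ} {φ : Formula P} {p : List ℕ}
    (h : φ.EncOK g y M ρStar z p) : 0 ≤ z p ∧ z p ≤ 1 := by
  cases φ with
  | pred π t => exact ⟨h.1, h.2.1⟩
  | conj n c => exact h.1
  | disj n c => exact h.1

theorem encoding_sound_aux {P Y : Type} (g : P → Y → ℝ) (y : ℕ → Y) (M ρStar : ℝ)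
    (φ : Formula P) (z : List ℕ → ℝ) : ∀ (p : List ℕ),
    φ.EncOK g y M ρStar z p → z p = 1 → ρStar ≤ φ.rob g y := by
  induction φ with
  | pred π t =>
    intro p henc hone
    obtain ⟨_, _, h⟩ := henc
    simpa [Formula.rob, hone] using h
  | conj n c ih =>
    intro p henc hone
    obtain ⟨⟨_, _⟩, h⟩ := henc
    simp only [Formula.rob, Finset.le_inf'_iff]
    intro i _
    have hi := h i
    have hle : z ((i : ℕ) :: p) = 1 :=
      le_antisymm hi.2.bounds.2
        (hone ▸ hi.1)
    exact ih i ((i : ℕ) :: p) hi.2 hle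
  | disj n c ih =>
    intro p henc hone
    obtain ⟨⟨_, _⟩, ⟨hnn, hsum, j, hj⟩, h⟩ := henc
    simp only [Formula.rob, Finset.le_sup'_iff]
    rcases Fin.eq_zero_or_eq_succ j with rfl | ⟨i, rfl⟩
    · simp [hone] at hj
    · refine ⟨i, Finset.mem_univ i, ih i ((i : ℕ) :: p) (h i) ?_⟩
      simpa using hj

/-- Soundness (Proposition 1): if the encoding constraints hold at a node and
its indicator equals 1, then `ρ*` lower-bounds that node's robustness; in
particular, at the enforced root, `ρ* ≥ 0` implies the signal satisfies the
specification. -/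
theorem encoding_sound {P Y : Type} (g : P → Y → ℝ) (y : ℕ → Y) (M ρStar : ℝ)
    (hM : ∀ (π : P) (t : ℕ), |(-(g π (y t))) + ρStar| ≤ M)
    (φ : Formula P) (z : List ℕ → ℝ) (p : List ℕ)
    (henc : φ.EncOK g y M ρStar z p) (hone : z p = 1) :
    ρStar ≤ φ.rob g y ∧ (0 ≤ ρStar → 0 ≤ φ.rob g y) := by

  have h := encoding_sound_aux g y M ρStar φ z p henc hone
  exact ⟨h, fun h0 => le_trans h0 h⟩
end

section
/- Completeness of the encoding: if a signal y satisfies a formula tree φ (built from predicates, finite conjunctions, and finite disjunctions) with robustness ρ^φ(y) ≥ 0, then there exists an assignment of indicator values z (each 0 or 1) to all nodes and ρ* = ρ^φ(y) such that all big-M leaf constraints, conjunction inequalities z^φ ≤ z^{φᵢ}, SOS1 disjunction constraints on (1 - z^φ, z^{φ₁}, …, z^{φ_N}), and the root constraint z^φ = 1 are satisfied, for any M ≥ 0 large enough that -g^π(y_t) + M ≥ ρ* for all leaves. -/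
private lemma suffix_eq_of_length {α} {l₁ l₂ q : List α} (h₁ : l₁ <:+ q) (h₂ : l₂ <:+ q)
    (h : l₁.length = l₂.length) : l₁ = l₂ :=
  (List.suffix_of_suffix_length_le h₁ h₂ h.le).eq_of_length h

/-- `EncOK` only depends on `z` on the subtree of `p`. -/
private lemma encok_congr {P Y : Type} (g : P → Y → ℝ) (y : ℕ → Y) (M ρ : ℝ)
    {z z' : List ℕ → ℝ} :
    ∀ (φ : Formula P) (p : List ℕ), (∀ q, p <:+ q → z q = z' q) →
      φ.EncOK g y M ρ z p → φ.EncOK g y M ρ z' p := by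
  intro φ
  induction φ with
  | pred π t =>
    intro p h hz
    simpa [Formula.EncOK, ← h p List.suffix_rfl] using hz
  | conj n c ih =>
    intro p h hz
    obtain ⟨hb, hc⟩ := hz
    refine ⟨by simpa [← h p List.suffix_rfl] using hb, fun i => ?_⟩
    have hsub : ∀ q, ((i : ℕ) :: p) <:+ q → z q = z' q := fun q hq =>
      h q ((List.suffix_cons (i : ℕ) p).trans hq)
    refine ⟨?_, ih i _ hsub (hc i).2⟩
    rw [← h p List.suffix_rfl, ← hsub _ List.suffix_rfl]
    exact (hc i).1
  | disj n c ih =>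
    intro p h hz
    obtain ⟨hb, hs, hc⟩ := hz
    have hch : ∀ i : Fin (n + 1), z ((i : ℕ) :: p) = z' ((i : ℕ) :: p) := fun i =>
      h _ (List.suffix_cons (i : ℕ) p)
    refine ⟨by simpa [← h p List.suffix_rfl] using hb, ?_, fun i => ?_⟩
    · have : (Fin.cons (1 - z' p) (fun i : Fin (n + 1) => z' ((i : ℕ) :: p)) : Fin (n + 2) → ℝ)
          = Fin.cons (1 - z p) (fun i : Fin (n + 1) => z ((i : ℕ) :: p)) := by
        ext j
        refine Fin.cases ?_ (fun i => ?_) j <;>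
          simp [h p List.suffix_rfl, hch]
      rw [this]; exact hs
    · exact ih i _ (fun q hq => h q ((List.suffix_cons (i : ℕ) p).trans hq)) (hc i)

/-- The all-zero assignment satisfies the (unenforced) constraints. -/
private lemma encok_zero {P Y : Type} (g : P → Y → ℝ) (y : ℕ → Y) (M ρ : ℝ)
    (hM : ∀ (π : P) (t : ℕ), ρ ≤ -(g π (y t)) + M) :
    ∀ (φ : Formula P) (p : List ℕ), φ.EncOK g y M ρ (fun _ => 0) p := by
  intro φ
  induction φ with
  | pred π t => intro p; exact ⟨le_refl 0, zero_le_one, by simpa using hM π t⟩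
  | conj n c ih => exact fun p => ⟨⟨le_refl 0, zero_le_one⟩, fun i => ⟨le_refl 0, ih i _⟩⟩
  | disj n c ih =>
    intro p
    refine ⟨⟨le_refl 0, zero_le_one⟩, ⟨fun j => ?_, ?_, ⟨0, by simp⟩⟩, fun i => ih i _⟩
    · refine Fin.cases ?_ (fun i => ?_) j <;> simp
    · simp [Fin.sum_cons]

/-- Main induction: a 0/1 witness supported on the subtree of `p`, enforcing `p`. -/
private lemma encok_exists {P Y : Type} (g : P → Y → ℝ) (y : ℕ → Y) (M ρ : ℝ)
    (hM : ∀ (π : P) (t : ℕ), ρ ≤ -(g π (y t)) + M) :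
    ∀ (φ : Formula P) (p : List ℕ), ρ ≤ φ.rob g y →
      ∃ z : List ℕ → ℝ, (∀ q, z q = 0 ∨ z q = 1) ∧ z p = 1 ∧
        (∀ q, z q ≠ 0 → p <:+ q) ∧ φ.EncOK g y M ρ z p := by
  intro φ
  induction φ with
  | pred π t =>
    intro p hρ
    classical
    refine ⟨fun q => if q = p then 1 else 0, fun q => by by_cases h : q = p <;> simp [h],
      by simp, fun q hq => ?_, ?_⟩
    · by_cases h : q = p
      · exact h ▸ List.suffix_rfl
      · simp [h] at hq
    · refine ⟨by simp, by simp, ?_⟩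
      simpa [Formula.rob] using hρ
  | conj n c ih =>
    intro p hρ
    classical
    have hchild : ∀ i : Fin (n + 1), ρ ≤ (c i).rob g y := fun i =>
      hρ.trans (Finset.inf'_le _ (Finset.mem_univ i))
    choose zs h01 hone hsupp henc using fun i : Fin (n + 1) =>
      ih i ((i : ℕ) :: p) (hchild i)
    -- supports of the `zs i` are pairwise disjoint
    have hdisj : ∀ q, ∀ i j : Fin (n + 1), zs i q ≠ 0 → zs j q ≠ 0 → i = j := by
      intro q i j hi hj
      have h := suffix_eq_of_length (hsupp i q hi) (hsupp j q hj) (by simp)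
      have : (i : ℕ) = (j : ℕ) := by simpa using h
      exact Fin.ext this
    set z : List ℕ → ℝ := fun q => if q = p then 1 else ∑ i, zs i q with hz
    have hzval : ∀ (i : Fin (n + 1)) (q : List ℕ), ((i : ℕ) :: p) <:+ q → z q = zs i q := by
      intro i q hq
      have hqp : q ≠ p := by
        intro h
        have := hq.length_le
        simp [h] at this
      have : ∀ j : Fin (n + 1), j ≠ i → zs j q = 0 := by
        intro j hji
        by_contra h
        by_cases hzi : zs i q = 0
        · exact hji (hdisj q j i h (by
            -- zs i q could be 0; need different argument: j's support forces j = i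
            exact hzi ▸ hzi.symm ▸ (by
              exfalso
              have hsj := hsupp j q h
              have := suffix_eq_of_length hsj hq (by simp)
              have : (j : ℕ) = (i : ℕ) := by simpa using this
              exact hji (Fin.ext this))))
        · exact hji (hdisj q j i h hzi)
      rw [hz]
      simp only [hqp, if_false]
      rw [Finset.sum_eq_single i (fun j _ hj => this j hj) (by simp)]
    refine ⟨z, ?_, by simp [hz], ?_, ?_⟩
    · intro q
      by_cases hq : q = p
      · right; simp [hz, hq]
      · by_cases h : ∃ i, zs i q ≠ 0
        · obtain ⟨i, hi⟩ := h
          have := hzval i q (hsupp i q hi)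
          rw [this]; exact h01 i q
        · push_neg at h
          left; simp only [hz, hq, if_false]
          exact Finset.sum_eq_zero fun i _ => h i
    · intro q hq
      by_cases h : q = p
      · exact h ▸ List.suffix_rfl
      · simp only [hz, h, if_false] at hq
        obtain ⟨i, _, hi⟩ := Finset.exists_ne_zero_of_sum_ne_zero hq
        exact (List.suffix_cons (i : ℕ) p).trans (hsupp i q hi)
    · refine ⟨⟨by simp [hz], by simp [hz]⟩, fun i => ?_⟩
      have hzi : z ((i : ℕ) :: p) = 1 := by
        rw [hzval i _ List.suffix_rfl]; exact hone i
      have hzp1 : z p = 1 := by simp [hz]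
      refine ⟨by rw [hzp1, hzi], ?_⟩
      exact encok_congr g y M ρ (c i) _ (fun q hq => (hzval i q hq).symm) (henc i)
  | disj n c ih =>
    intro p hρ
    classical
    obtain ⟨i₀, _, hi₀⟩ := Finset.exists_mem_eq_sup' (Finset.univ_nonempty)
      (fun i : Fin (n + 1) => (c i).rob g y)
    have hchild : ρ ≤ (c i₀).rob g y := by
      simpa [Formula.rob, ← hi₀] using hρ
    obtain ⟨z₀, h01, hone, hsupp, henc⟩ := ih i₀ ((i₀ : ℕ) :: p) hchild
    set z : List ℕ → ℝ := fun q => if q = p then 1 else z₀ q with hz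
    have hne : ∀ i : Fin (n + 1), ((i : ℕ) :: p) ≠ p := fun i h => by
      have := congrArg List.length h; simp at this
    have hzc : ∀ i : Fin (n + 1), z ((i : ℕ) :: p) = if i = i₀ then 1 else 0 := by
      intro i
      rw [hz]
      simp only [hne i, if_false]
      by_cases h : i = i₀
      · simp [h, hone]
      · simp only [h, if_false]
        by_contra hne0
        have := suffix_eq_of_length (hsupp _ hne0) List.suffix_rfl (by simp)
        have : (i₀ : ℕ) = (i : ℕ) := by simpa using this
        exact h (Fin.ext this.symm)
    refine ⟨z, ?_, by simp [hz], ?_, ?_⟩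
    · intro q
      by_cases hq : q = p
      · right; simp [hz, hq]
      · simp only [hz, hq, if_false]; exact h01 q
    · intro q hq
      by_cases h : q = p
      · exact h ▸ List.suffix_rfl
      · simp only [hz, h, if_false] at hq
        exact (List.suffix_cons (i₀ : ℕ) p).trans (hsupp q hq)
    · have hzp : z p = 1 := by simp [hz]
      refine ⟨⟨by simp [hzp], by simp [hzp]⟩, ⟨?_, ?_, ?_⟩, fun i => ?_⟩
      · intro j
        refine Fin.cases ?_ (fun i => ?_) j
        · simp [hzp]
        · simp only [Fin.cons_succ, hzc]
          by_cases h : i = i₀ <;> simp [h]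
      · rw [Fin.sum_cons, hzp]
        have : (∑ i : Fin (n + 1), z ((i : ℕ) :: p)) = 1 := by
          simp only [hzc]
          simp
        rw [this]; ring
      · exact ⟨Fin.succ i₀, by simp [Fin.cons_succ, hzc]⟩
      · by_cases h : i = i₀
        · subst h
          refine encok_congr g y M ρ (c i) _ (fun q hq => ?_) henc
          have hqp : q ≠ p := fun hh => by
            have := hq.length_le; simp [hh] at this
          simp [hz, hqp]
        · refine encok_congr g y M ρ (c i) _ (fun q hq => ?_)
            (encok_zero g y M ρ hM (c i) _)
          have hqp : q ≠ p := fun hh => by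
            have := hq.length_le; simp [hh] at this
          simp only [hz, hqp, if_false]
          symm
          by_contra hne0
          have := suffix_eq_of_length (hsupp _ hne0) hq (by simp)
          have : (i₀ : ℕ) = (i : ℕ) := by simpa using this
          exact h (Fin.ext this.symm)
    
/-- Completeness: if a signal satisfies the formula (nonnegative robustness),
then with `ρ* = ρ^φ(y)` there is a 0/1 indicator assignment satisfying all the
encoding constraints with the root enforced, provided `M ≥ 0` is large enough
that `-g^π(y_t) + M ≥ ρ*` for all leaves. -/
theorem encoding_complete {P Y : Type} (g : P → Y → ℝ) (y : ℕ → Y) (M : ℝ)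
    (φ : Formula P) (p : List ℕ)
    (hsat : 0 ≤ φ.rob g y)
    (hM0 : 0 ≤ M)
    (hM : ∀ (π : P) (t : ℕ), φ.rob g y ≤ -(g π (y t)) + M) :
    ∃ z : List ℕ → ℝ, (∀ q, z q = 0 ∨ z q = 1) ∧ z p = 1 ∧
      φ.EncOK g y M (φ.rob g y) z p := by
  obtain ⟨z, h01, hone, _, henc⟩ := encok_exists g y M (φ.rob g y) hM φ p le_rfl
  exact ⟨z, h01, hone, henc⟩
end
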